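/- Let Ω ⊆ ℝ² be open and let w₀, w₁ : Ω → ℝ be functions of class C⁴ on Ω satisfying ∂ₓᵧw₁ = 0 and ∇²w₀ + ∂ₓₓw₁ − ∂ᵧᵧw₁ = 0 on Ω. Define u = ∂ₓw₀ + ∂ₓw₁ and v = ∂ᵧw₀ − ∂ᵧw₁. Then ∂ₓu + ∂ᵧv = 0 on Ω, and for every ν ∈ ℝ and every f : Ω → ℝ of class C², the curl compatibility condition ∂ᵧ(ν∇²u − u ∂ₓu − v ∂ᵧu + ∂ₓf) = ∂ₓ(ν∇²v − u ∂ₓv − v ∂ᵧv + ∂ᵧf) holds on Ω. -/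

import Mathlib

/-- Partial derivative along the first coordinate direction. -/
noncomputable def pdx (w : ℝ × ℝ → ℝ) : ℝ × ℝ → ℝ := fun p => fderiv ℝ w p (1, 0)

/-- Partial derivative along the second coordinate direction. -/
noncomputable def pdy (w : ℝ × ℝ → ℝ) : ℝ × ℝ → ℝ := fun p => fderiv ℝ w p (0, 1)

/-- Laplacian ∇²w = ∂ₓₓw + ∂ᵧᵧw. -/
noncomputable def lap (w : ℝ × ℝ → ℝ) : ℝ × ℝ → ℝ := fun p => pdx (pdx w) p + pdy (pdy w) p

/-!
The vector field `V = (u, v)` is divergence-free by the equation for `w₀` and curl-free because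
`∂ₓᵧw₁ = 0`, so `u` and `v` are harmonic and the viscous terms vanish. For a curl-free field the
convective term is a gradient, `(V·∇)V = ∇(|V|²/2)`, so both momentum components are the partial
derivatives of the single potential `f - |V|²/2`, and the compatibility condition is the symmetry
of its mixed second derivatives.
-/

open Filter Topology

section DirectionalDerivatives

variable {E F : Type*} [NormedAddCommGroup E] [NormedSpace ℝ E]
  [NormedAddCommGroup F] [NormedSpace ℝ F] {f : E → F} {p : E}

theorem fderiv_fderiv_apply_const (h : DifferentiableAt ℝ (fderiv ℝ f) p) (a b : E) :
    fderiv ℝ (fun q => fderiv ℝ f q a) p b = fderiv ℝ (fderiv ℝ f) p b a := by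
  rw [(h.hasFDerivAt.clm_apply (hasFDerivAt_const a p)).fderiv]
  simp

theorem ContDiffAt.fderiv_fderiv_apply_comm (h : ContDiffAt ℝ 2 f p) (a b : E) :
    fderiv ℝ (fun q => fderiv ℝ f q a) p b = fderiv ℝ (fun q => fderiv ℝ f q b) p a := by
  have hd : DifferentiableAt ℝ (fderiv ℝ f) p :=
    (h.fderiv_right (m := 1) le_rfl).differentiableAt one_ne_zero
  rw [fderiv_fderiv_apply_const hd, fderiv_fderiv_apply_const hd]
  exact h.isSymmSndFDerivAt minSmoothness_of_isRCLikeNormedField.le b a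

theorem ContDiffOn.fderiv_apply_of_isOpen {s : Set E} {m n : WithTop ℕ∞}
    (hf : ContDiffOn ℝ n f s) (hs : IsOpen s) (hmn : m + 1 ≤ n) (e : E) :
    ContDiffOn ℝ m (fun q => fderiv ℝ f q e) s :=
  (hf.fderiv_of_isOpen hs hmn).clm_apply contDiffOn_const

theorem fderiv_half_sq_add_sq_apply {u v : E → ℝ} (hu : DifferentiableAt ℝ u p)
    (hv : DifferentiableAt ℝ v p) (e : E) :
    fderiv ℝ (fun q => (u q ^ 2 + v q ^ 2) / 2) p e =
      u p * fderiv ℝ u p e + v p * fderiv ℝ v p e := by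
  have h := ((hu.hasFDerivAt.pow 2).fun_add (hv.hasFDerivAt.pow 2)).mul_const (2⁻¹ : ℝ)
  simp only [← div_eq_mul_inv] at h
  rw [h.fderiv]
  simp only [Nat.add_one_sub_one, pow_one, nsmul_eq_mul, Nat.cast_ofNat, smul_add, add_apply,
    smul_apply, smul_eq_mul]
  ring

end DirectionalDerivatives

section PartialDerivatives

variable {w g : ℝ × ℝ → ℝ} {p : ℝ × ℝ}

theorem pdx_add (hw : DifferentiableAt ℝ w p) (hg : DifferentiableAt ℝ g p) :
    pdx (fun q => w q + g q) p = pdx w p + pdx g p := by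
  simp only [pdx, fderiv_fun_add hw hg, add_apply]

theorem pdy_add (hw : DifferentiableAt ℝ w p) (hg : DifferentiableAt ℝ g p) :
    pdy (fun q => w q + g q) p = pdy w p + pdy g p := by
  simp only [pdy, fderiv_fun_add hw hg, add_apply]

theorem pdx_sub (hw : DifferentiableAt ℝ w p) (hg : DifferentiableAt ℝ g p) :
    pdx (fun q => w q - g q) p = pdx w p - pdx g p := by
  simp only [pdx, fderiv_fun_sub hw hg, sub_apply]

theorem pdy_sub (hw : DifferentiableAt ℝ w p) (hg : DifferentiableAt ℝ g p) :
    pdy (fun q => w q - g q) p = pdy w p - pdy g p := by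
  simp only [pdy, fderiv_fun_sub hw hg, sub_apply]

theorem pdx_neg : pdx (fun q => -w q) p = -pdx w p := by
  simp only [pdx, fderiv_fun_neg, neg_apply]

theorem pdy_neg : pdy (fun q => -w q) p = -pdy w p := by
  simp only [pdy, fderiv_fun_neg, neg_apply]

theorem Filter.EventuallyEq.pdx_eq (h : w =ᶠ[𝓝 p] g) : pdx w p = pdx g p := by
  simp only [pdx, h.fderiv_eq]

theorem Filter.EventuallyEq.pdy_eq (h : w =ᶠ[𝓝 p] g) : pdy w p = pdy g p := by
  simp only [pdy, h.fderiv_eq]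

theorem ContDiffAt.pdx_pdy_comm (h : ContDiffAt ℝ 2 w p) : pdx (pdy w) p = pdy (pdx w) p :=
  h.fderiv_fderiv_apply_comm _ _

theorem ContDiffAt.differentiableAt_pdx (h : ContDiffAt ℝ 2 w p) :
    DifferentiableAt ℝ (pdx w) p :=
  ((h.fderiv_right (m := 1) le_rfl).clm_apply contDiffAt_const).differentiableAt one_ne_zero

theorem ContDiffAt.differentiableAt_pdy (h : ContDiffAt ℝ 2 w p) :
    DifferentiableAt ℝ (pdy w) p :=
  ((h.fderiv_right (m := 1) le_rfl).clm_apply contDiffAt_const).differentiableAt one_ne_zero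

theorem ContDiffOn.pdx {Ω : Set (ℝ × ℝ)} {m n : WithTop ℕ∞} (hw : ContDiffOn ℝ n w Ω)
    (hΩ : IsOpen Ω) (hmn : m + 1 ≤ n) : ContDiffOn ℝ m (pdx w) Ω :=
  hw.fderiv_apply_of_isOpen hΩ hmn _

theorem ContDiffOn.pdy {Ω : Set (ℝ × ℝ)} {m n : WithTop ℕ∞} (hw : ContDiffOn ℝ n w Ω)
    (hΩ : IsOpen Ω) (hmn : m + 1 ≤ n) : ContDiffOn ℝ m (pdy w) Ω :=
  hw.fderiv_apply_of_isOpen hΩ hmn _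

end PartialDerivatives

section Potentials

variable {w₀ w₁ : ℝ × ℝ → ℝ} {p : ℝ × ℝ}

theorem pdx_add_pdy_of_potentials (h₀ : ContDiffAt ℝ 2 w₀ p) (h₁ : ContDiffAt ℝ 2 w₁ p) :
    pdx (fun q => pdx w₀ q + pdx w₁ q) p + pdy (fun q => pdy w₀ q - pdy w₁ q) p =
      lap w₀ p + pdx (pdx w₁) p - pdy (pdy w₁) p := by
  rw [pdx_add h₀.differentiableAt_pdx h₁.differentiableAt_pdx,
    pdy_sub h₀.differentiableAt_pdy h₁.differentiableAt_pdy, lap]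
  ring

theorem pdy_sub_pdx_of_potentials (h₀ : ContDiffAt ℝ 2 w₀ p) (h₁ : ContDiffAt ℝ 2 w₁ p) :
    pdy (fun q => pdx w₀ q + pdx w₁ q) p - pdx (fun q => pdy w₀ q - pdy w₁ q) p =
      2 * pdx (pdy w₁) p := by
  rw [pdy_add h₀.differentiableAt_pdx h₁.differentiableAt_pdx,
    pdx_sub h₀.differentiableAt_pdy h₁.differentiableAt_pdy, h₀.pdx_pdy_comm, h₁.pdx_pdy_comm]
  ring

end Potentials

section DivCurlFree

variable {Ω : Set (ℝ × ℝ)} {u v : ℝ × ℝ → ℝ}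

theorem lap_eq_zero_of_div_curl (hΩ : IsOpen Ω) (hv : ContDiffOn ℝ 2 v Ω)
    (hdiv : ∀ p ∈ Ω, pdx u p + pdy v p = 0) (hcurl : ∀ p ∈ Ω, pdy u p = pdx v p)
    {p : ℝ × ℝ} (hp : p ∈ Ω) : lap u p = 0 := by
  have hux : pdx u =ᶠ[𝓝 p] fun q => -pdy v q :=
    eventuallyEq_of_mem (hΩ.mem_nhds hp) fun q hq => eq_neg_of_add_eq_zero_left (hdiv q hq)
  have huy : pdy u =ᶠ[𝓝 p] pdx v := eventuallyEq_of_mem (hΩ.mem_nhds hp) hcurl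
  rw [lap, hux.pdx_eq, huy.pdy_eq, pdx_neg, (hv.contDiffAt (hΩ.mem_nhds hp)).pdx_pdy_comm]
  ring

/-- The rotated field `(v, -u)` is again divergence- and curl-free. -/
theorem lap_snd_eq_zero_of_div_curl (hΩ : IsOpen Ω) (hu : ContDiffOn ℝ 2 u Ω)
    (hdiv : ∀ p ∈ Ω, pdx u p + pdy v p = 0) (hcurl : ∀ p ∈ Ω, pdy u p = pdx v p)
    {p : ℝ × ℝ} (hp : p ∈ Ω) : lap v p = 0 :=
  lap_eq_zero_of_div_curl (v := fun q => -u q) hΩ hu.neg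
    (fun q hq => by rw [pdy_neg, ← hcurl q hq, add_neg_cancel])
    (fun q hq => by rw [pdx_neg, eq_neg_iff_add_eq_zero, add_comm, hdiv q hq]) hp

theorem curl_compatibility_of_div_curl {f : ℝ × ℝ → ℝ} (hΩ : IsOpen Ω)
    (hu : ContDiffOn ℝ 2 u Ω) (hv : ContDiffOn ℝ 2 v Ω) (hf : ContDiffOn ℝ 2 f Ω)
    (hdiv : ∀ p ∈ Ω, pdx u p + pdy v p = 0) (hcurl : ∀ p ∈ Ω, pdy u p = pdx v p)
    (ν : ℝ) {p : ℝ × ℝ} (hp : p ∈ Ω) :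
    pdy (fun q => ν * lap u q - u q * pdx u q - v q * pdy u q + pdx f q) p =
      pdx (fun q => ν * lap v q - u q * pdx v q - v q * pdy v q + pdy f q) p := by
  set K : ℝ × ℝ → ℝ := fun q => (u q ^ 2 + v q ^ 2) / 2
  have hK : ContDiffOn ℝ 2 K Ω := ((hu.pow 2).add (hv.pow 2)).div_const 2
  have hdiff {g : ℝ × ℝ → ℝ} (hg : ContDiffOn ℝ 2 g Ω) {q : ℝ × ℝ} (hq : q ∈ Ω) :
      DifferentiableAt ℝ g q :=
    (hg.differentiableOn two_ne_zero).differentiableAt (hΩ.mem_nhds hq)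
  have hx : (fun q => ν * lap u q - u q * pdx u q - v q * pdy u q + pdx f q) =ᶠ[𝓝 p]
      pdx (fun q => f q - K q) := by
    refine eventuallyEq_of_mem (hΩ.mem_nhds hp) fun q hq => ?_
    have hKx : pdx K q = u q * pdx u q + v q * pdx v q :=
      fderiv_half_sq_add_sq_apply (hdiff hu hq) (hdiff hv hq) _
    rw [pdx_sub (hdiff hf hq) (hdiff hK hq), hKx,
      lap_eq_zero_of_div_curl hΩ hv hdiv hcurl hq, hcurl q hq]
    ring
  have hy : (fun q => ν * lap v q - u q * pdx v q - v q * pdy v q + pdy f q) =ᶠ[𝓝 p]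
      pdy (fun q => f q - K q) := by
    refine eventuallyEq_of_mem (hΩ.mem_nhds hp) fun q hq => ?_
    have hKy : pdy K q = u q * pdy u q + v q * pdy v q :=
      fderiv_half_sq_add_sq_apply (hdiff hu hq) (hdiff hv hq) _
    rw [pdy_sub (hdiff hf hq) (hdiff hK hq), hKy,
      lap_snd_eq_zero_of_div_curl hΩ hu hdiv hcurl hq, hcurl q hq]
    ring
  rw [hx.pdy_eq, hy.pdx_eq]
  exact ((hf.sub hK).contDiffAt (hΩ.mem_nhds hp)).pdx_pdy_comm.symm

end DivCurlFree

theorem special_case_w2_zero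
    (Ω : Set (ℝ × ℝ)) (hΩ : IsOpen Ω)
    (w₀ w₁ : ℝ × ℝ → ℝ)
    (hw₀ : ContDiffOn ℝ 4 w₀ Ω) (hw₁ : ContDiffOn ℝ 4 w₁ Ω)
    (hmix : ∀ p ∈ Ω, pdx (pdy w₁) p = 0)
    (hw0eq : ∀ p ∈ Ω, lap w₀ p + pdx (pdx w₁) p - pdy (pdy w₁) p = 0)
    (u v : ℝ × ℝ → ℝ)
    (hu : ∀ p, u p = pdx w₀ p + pdx w₁ p)
    (hv : ∀ p, v p = pdy w₀ p - pdy w₁ p) :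
    (∀ p ∈ Ω, pdx u p + pdy v p = 0) ∧
    (∀ (ν : ℝ) (f : ℝ × ℝ → ℝ), ContDiffOn ℝ 2 f Ω →
      ∀ p ∈ Ω,
        pdy (fun q => ν * lap u q - u q * pdx u q - v q * pdy u q + pdx f q) p =
        pdx (fun q => ν * lap v q - u q * pdx v q - v q * pdy v q + pdy f q) p) := by
  obtain rfl : u = fun q => pdx w₀ q + pdx w₁ q := funext hu
  obtain rfl : v = fun q => pdy w₀ q - pdy w₁ q := funext hv
  have hC2 {w : ℝ × ℝ → ℝ} (hw : ContDiffOn ℝ 4 w Ω) {p : ℝ × ℝ} (hp : p ∈ Ω) :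
      ContDiffAt ℝ 2 w p :=
    (hw.contDiffAt (hΩ.mem_nhds hp)).of_le (by norm_num)
  have hdiv : ∀ p ∈ Ω, _ := fun p hp =>
    (pdx_add_pdy_of_potentials (hC2 hw₀ hp) (hC2 hw₁ hp)).trans (hw0eq p hp)
  have hcurl : ∀ p ∈ Ω, _ := fun p hp => by
    have h := pdy_sub_pdx_of_potentials (hC2 hw₀ hp) (hC2 hw₁ hp)
    rwa [hmix p hp, mul_zero, sub_eq_zero] at h
  refine ⟨hdiv, fun ν f hf p hp => curl_compatibility_of_div_curl hΩ ?_ ?_ hf hdiv hcurl ν hp⟩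
  · exact (hw₀.pdx hΩ (by norm_num)).add (hw₁.pdx hΩ (by norm_num))
  · exact (hw₀.pdy hΩ (by norm_num)).sub (hw₁.pdy hΩ (by norm_num))
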